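/- For all i ≥ 0 and r > 0, the function ψ_i satisfies the second-order differential equation ψ_i''(r) + (2i/r)·ψ_i'(r) − ψ_i(r) = 0. -/

import Mathlib

/-!
Write `L_a f = f'' + (2a/r) f' - f`. Differentiating `L_a f = 0` once and dividing by `-r` shows
that `-f'/r` solves `L_{a+1} = 0`; since `e^{-r}` solves `L_0 = 0`, induction on `i` gives the claim.
-/

/-- ψ₀(r) = e^{-r}, ψ_{i+1}(r) = -(1/r)·ψ_i'(r). -/
noncomputable def psi : ℕ → ℝ → ℝ
  | 0 => fun r => Real.exp (-r)
  | (i+1) => fun r => -(1/r) * deriv (psi i) r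

open Set Filter Topology
open scoped ContDiff

/-- For `a = (d - 1) / 2` this is the radial form of `Δf = f` on `ℝ^d`. -/
def SolvesRadialODE (a : ℝ) (f : ℝ → ℝ) : Prop :=
  ∀ r > 0, deriv (deriv f) r + 2 * a / r * deriv f r - f r = 0

theorem hasDerivAt_neg_one_div_mul {u : ℝ → ℝ} {u' s : ℝ} (hu : HasDerivAt u u' s)
    (hs : s ≠ 0) :
    HasDerivAt (fun t => -(1 / t) * u t) (-(1 / s) * (-(1 / s) * u s + u')) s := by
  have hinv : HasDerivAt (fun t : ℝ => -(1 / t)) (-((0 * s - 1 * 1) / s ^ 2)) s :=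
    ((hasDerivAt_const s (1 : ℝ)).fun_div (hasDerivAt_id' s) hs).neg
  refine (hinv.mul hu).congr_deriv ?_
  field_simp
  ring

theorem ContDiffOn.differentiableAt_of_mem_Ioi {f : ℝ → ℝ} (hf : ContDiffOn ℝ ∞ f (Ioi 0))
    {s : ℝ} (hs : 0 < s) : DifferentiableAt ℝ f s :=
  (hf.contDiffAt (Ioi_mem_nhds hs)).differentiableAt (by simp)

theorem ContDiffOn.neg_one_div_mul_deriv {f : ℝ → ℝ} (hf : ContDiffOn ℝ ∞ f (Ioi 0)) :
    ContDiffOn ℝ ∞ (fun t => -(1 / t) * deriv f t) (Ioi 0) :=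
  ((contDiffOn_const.div contDiffOn_id fun _ ht => ht.ne').neg).mul
    (hf.deriv_of_isOpen isOpen_Ioi le_rfl)

theorem solvesRadialODE_exp_neg : SolvesRadialODE 0 fun r => Real.exp (-r) := by
  intro r _
  have hd : ∀ r, HasDerivAt (fun r => Real.exp (-r)) (-Real.exp (-r)) r := fun r => by
    simpa using (hasDerivAt_neg r).exp
  have hd' : deriv (fun r => Real.exp (-r)) = fun r => -Real.exp (-r) :=
    funext fun r => (hd r).deriv
  simp [hd']

theorem SolvesRadialODE.neg_one_div_mul_deriv {a : ℝ} {f : ℝ → ℝ}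
    (hf : ContDiffOn ℝ ∞ f (Ioi 0)) (hode : SolvesRadialODE a f) :
    SolvesRadialODE (a + 1) fun t => -(1 / t) * deriv f t := by
  intro r hr
  set u := deriv f
  set g := fun t => -(1 / t) * u t
  have hu : ContDiffOn ℝ ∞ u (Ioi 0) := hf.deriv_of_isOpen isOpen_Ioi le_rfl
  have hu' : ContDiffOn ℝ ∞ (deriv u) (Ioi 0) := hu.deriv_of_isOpen isOpen_Ioi le_rfl
  -- `g' = -(g + u')/t` has the same shape as `g`, so `g''` is computed by the same lemma.
  have hg : ∀ s > 0, HasDerivAt g (-(1 / s) * (g s + deriv u s)) s := fun s hs =>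
    hasDerivAt_neg_one_div_mul (hu.differentiableAt_of_mem_Ioi hs).hasDerivAt hs.ne'
  have hg' : HasDerivAt (deriv g) (-(1 / r) * (-(1 / r) * (g r + deriv u r)
      + (-(1 / r) * (g r + deriv u r) + deriv (deriv u) r))) r := by
    refine (hasDerivAt_neg_one_div_mul ((hg r hr).add ?_) hr.ne').congr_of_eventuallyEq ?_
    · exact (hu'.differentiableAt_of_mem_Ioi hr).hasDerivAt
    · filter_upwards [Ioi_mem_nhds hr] with s hs
      exact (hg s hs).deriv
  -- `u''` comes from differentiating the equation `u' = f - (2a/t) u` near `r`.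
  have hu'' : HasDerivAt (deriv u)
      (u r - (-(2 * a) / r ^ 2 * u r + 2 * a / r * deriv u r)) r := by
    have hu'_eq : deriv u =ᶠ[𝓝 r] fun s => f s - 2 * a / s * u s := by
      filter_upwards [Ioi_mem_nhds hr] with s hs
      linarith [hode s hs]
    refine (HasDerivAt.sub ?_ (HasDerivAt.mul ?_ ?_)).congr_of_eventuallyEq hu'_eq
    · exact (hf.differentiableAt_of_mem_Ioi hr).hasDerivAt
    · convert (hasDerivAt_const r (2 * a)).fun_div (hasDerivAt_id' r) hr.ne' using 1
      ring
    · exact (hu.differentiableAt_of_mem_Ioi hr).hasDerivAt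
  rw [hg'.deriv, (hg r hr).deriv, hu''.deriv]
  simp only [g]
  field_simp
  ring

theorem psi_contDiffOn (i : ℕ) : ContDiffOn ℝ ∞ (psi i) (Ioi 0) := by
  induction i with
  | zero => exact (Real.contDiff_exp.comp contDiff_neg).contDiffOn
  | succ i ih => exact ih.neg_one_div_mul_deriv

theorem psi_solvesRadialODE (i : ℕ) : SolvesRadialODE i (psi i) := by
  induction i with
  | zero => simpa [psi] using solvesRadialODE_exp_neg
  | succ i ih =>
    push_cast
    exact ih.neg_one_div_mul_deriv (psi_contDiffOn i)

theorem psi_ode (i : ℕ) (r : ℝ) (hr : 0 < r) :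
    deriv (deriv (psi i)) r + (2 * (i : ℝ) / r) * deriv (psi i) r - psi i r = 0 :=
  psi_solvesRadialODE i r hr
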